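/- arXiv:1905.08701 — 2 statements merged into one kernel-verified Lean document; each statement's English description precedes it below -/
import Mathlib

section
/- Let p_s and p_a be probabilistic models over Σ such that L(p_s) ⊆ L(p_a), p_s terminates almost surely, and both the family {p_s(x)·log(p_s(x)/p_a(x))}_{x∈L(p_s)} and the family {p_s(h)·p_s(x|h)·log(p_s(x|h)/p_a(x|h))}_{h a $-free history, x∈Σ} are absolutely summable. Then D(p_s‖p_a) = Σ_{$-free h∈Σ*} p_s(h) · Σ_{x∈Σ} p_s(x|h)·log(p_s(x|h)/p_a(x|h)); that is, the KL divergence between the two sequence models equals the p_s-weighted sum over all $-free histories of the per-history next-symbol KL divergence. -/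
open scoped BigOperators
open Classical

noncomputable section

variable {α : Type*}

/-- Probability of reading the string `x` after history `h` under conditional model `p`,
where `p h x` is the probability of next symbol `x` given history `h`. -/
def probFrom (p : List α → α → ℝ) : List α → List α → ℝ
  | _, [] => 1
  | h, x :: t => p h x * probFrom p (h ++ [x]) t

/-- Probability assigned to the string `x`: `p(x₁⋯xₙ) = ∏ᵢ p(xᵢ | x₁⋯xᵢ₋₁)`. -/
def strProb (p : List α → α → ℝ) (x : List α) : ℝ := probFrom p [] x

/-- `p` is a probabilistic model over `α` with distinguished end symbol `dollar`. -/
structure IsProbModel [Fintype α] (dollar : α) (p : List α → α → ℝ) : Prop where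
  nonneg : ∀ h x, 0 ≤ p h x
  sum_one : ∀ h, dollar ∉ h → ∑ x, p h x = 1
  halt : ∀ h, dollar ∈ h → ∀ x, p h x = 0

/-- The language of a model: strings of positive probability ending in (a single) `dollar`. -/
def Lang (dollar : α) (p : List α → α → ℝ) : Set (List α) :=
  {x | 0 < strProb p x ∧ ∃ w, x = w ++ [dollar] ∧ dollar ∉ w}

/-- `p` terminates almost surely. -/
def TerminatesAS (dollar : α) (p : List α → α → ℝ) : Prop :=
  ∑' x : Lang dollar p, strProb p x = 1

/-- KL divergence between two sequence models (with the convention `0·log(0/0) = 0`,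
which holds definitionally here since `Real.log 0 = 0`). -/
def KLdiv (dollar : α) (ps pa : List α → α → ℝ) : ℝ :=
  ∑' x : Lang dollar ps, strProb ps x * Real.log (strProb ps x / strProb pa x)

-- AUX
lemma probFrom_nil (p : List α → α → ℝ) (h : List α) : probFrom p h [] = 1 := rfl

lemma probFrom_cons (p : List α → α → ℝ) (h : List α) (x : α) (t : List α) :
    probFrom p h (x :: t) = p h x * probFrom p (h ++ [x]) t := rfl

lemma probFrom_append (p : List α → α → ℝ) (h t₁ t₂ : List α) :
    probFrom p h (t₁ ++ t₂) = probFrom p h t₁ * probFrom p (h ++ t₁) t₂ := by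
  induction t₁ generalizing h with
  | nil => simp [probFrom_nil]
  | cons x t ih =>
    simp only [List.cons_append, probFrom_cons, ih (h ++ [x]), List.append_assoc, List.singleton_append, mul_assoc, List.nil_append]

lemma strProb_append (p : List α → α → ℝ) (h t : List α) :
    strProb p (h ++ t) = strProb p h * probFrom p h t := by
  simpa [strProb] using probFrom_append p [] h t

lemma strProb_concat (p : List α → α → ℝ) (h : List α) (y : α) :
    strProb p (h ++ [y]) = strProb p h * p h y := by
  simp [strProb_append, probFrom_cons, probFrom_nil]

lemma probFrom_eq_prod (p : List α → α → ℝ) (h t : List α) :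
    probFrom p h t = ∏ i : Fin t.length, p (h ++ t.take i) (t.get i) := by
  induction t generalizing h with
  | nil => simp [probFrom_nil]
  | cons x t ih =>
    rw [probFrom_cons, ih (h ++ [x])]
    rw [show (∏ i : Fin (x :: t).length, p (h ++ List.take (↑i) (x :: t)) ((x :: t).get i))
        = ∏ i : Fin (t.length + 1), p (h ++ List.take (↑i) (x :: t)) ((x :: t).get i) from rfl,
      Fin.prod_univ_succ]
    simp [List.append_assoc]

lemma strProb_eq_prod (p : List α → α → ℝ) (t : List α) :
    strProb p t = ∏ i : Fin t.length, p (t.take i) (t.get i) := by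
  simpa [strProb] using probFrom_eq_prod p [] t

section Model
variable [Fintype α] {dollar : α} {p ps pa : List α → α → ℝ}

lemma probFrom_nonneg (hp : ∀ h x, 0 ≤ p h x) (h t : List α) : 0 ≤ probFrom p h t := by
  induction t generalizing h with
  | nil => simp [probFrom_nil]
  | cons x t ih => exact mul_nonneg (hp h x) (ih (h ++ [x]))

lemma strProb_nonneg (hp : ∀ h x, 0 ≤ p h x) (t : List α) : 0 ≤ strProb p t :=
  probFrom_nonneg hp [] t

lemma factor_pos (hp : ∀ h x, 0 ≤ p h x) {t : List α} (hpos : 0 < strProb p t)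
    (i : Fin t.length) : 0 < p (t.take i) (t.get i) := by
  rw [strProb_eq_prod] at hpos
  rcases (lt_or_eq_of_le (hp (t.take i) (t.get i))) with h | h
  · exact h
  · exfalso
    rw [Finset.prod_eq_zero (Finset.mem_univ i) h.symm] at hpos
    exact lt_irrefl _ hpos

/-- chain rule for the log-ratio. -/
lemma log_ratio_chain (hps : ∀ h x, 0 ≤ ps h x) (hpa : ∀ h x, 0 ≤ pa h x)
    {t : List α} (h1 : 0 < strProb ps t) (h2 : 0 < strProb pa t) :
    Real.log (strProb ps t / strProb pa t)
      = ∑ i : Fin t.length,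
          Real.log (ps (t.take i) (t.get i) / pa (t.take i) (t.get i)) := by
  have e1 : Real.log (strProb ps t) = ∑ i : Fin t.length, Real.log (ps (t.take i) (t.get i)) := by
    rw [strProb_eq_prod]
    exact Real.log_prod (fun i _ => (factor_pos hps h1 i).ne')
  have e2 : Real.log (strProb pa t) = ∑ i : Fin t.length, Real.log (pa (t.take i) (t.get i)) := by
    rw [strProb_eq_prod]
    exact Real.log_prod (fun i _ => (factor_pos hpa h2 i).ne')
  rw [Real.log_div h1.ne' h2.ne', e1, e2, ← Finset.sum_sub_distrib]
  exact Finset.sum_congr rfl fun i _ =>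
    (Real.log_div (factor_pos hps h1 i).ne' (factor_pos hpa h2 i).ne').symm


lemma sum_le_one (hp : IsProbModel dollar p) (h : List α) : ∑ x, p h x ≤ 1 := by
  by_cases hd : dollar ∈ h
  · simp [hp.halt h hd]
  · exact le_of_eq (hp.sum_one h hd)

lemma probFrom_halt (hp : IsProbModel dollar p) {w : List α} (hd : dollar ∈ w)
    {t : List α} (ht : t ≠ []) : probFrom p w t = 0 := by
  cases t with
  | nil => exact absurd rfl ht
  | cons x t => simp [probFrom_cons, hp.halt w hd x]

/-- Kraft-type bound: finitely many strings of the language extending `w`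
have total conditional probability at most 1. -/
lemma kraft (hp : IsProbModel dollar p) :
    ∀ n : ℕ, ∀ w : List α, ∀ S : Finset (List α), (∀ t ∈ S, t.length ≤ n) →
      (∀ t ∈ S, (w ++ t) ∈ Lang dollar p) → ∑ t ∈ S, probFrom p w t ≤ 1 := by
  haveI : Inhabited α := ⟨dollar⟩
  intro n
  induction n with
  | zero =>
    intro w S hlen hmem
    have : S ⊆ {([] : List α)} := by
      intro t ht
      simp only [Finset.mem_singleton]
      exact List.length_eq_zero_iff.mp (Nat.le_zero.mp (hlen t ht))
    calc ∑ t ∈ S, probFrom p w t ≤ ∑ t ∈ {([] : List α)}, probFrom p w t :=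
          Finset.sum_le_sum_of_subset_of_nonneg this
            (fun t _ _ => probFrom_nonneg hp.nonneg w t)
      _ = 1 := by simp [probFrom_nil]
  | succ n ih =>
    intro w S hlen hmem
    by_cases hd : dollar ∈ w
    · -- all nonempty t contribute 0
      calc ∑ t ∈ S, probFrom p w t
          ≤ ∑ t ∈ S, (if t = [] then 1 else 0) := by
            refine Finset.sum_le_sum fun t ht => ?_
            by_cases h0 : t = []
            · simp [h0, probFrom_nil]
            · simp [h0, probFrom_halt hp hd h0]
        _ ≤ 1 := by
            rw [Finset.sum_ite_eq' S ([] : List α) (fun _ => (1:ℝ))]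
            split <;> norm_num
    · -- w is dollar-free; [] ∉ S
      have hnil : ([] : List α) ∉ S := by
        intro h0
        have := hmem [] h0
        rw [List.append_nil] at this
        obtain ⟨u, hu, hdu⟩ := this.2
        exact hd (hu ▸ List.mem_append_right u (List.mem_singleton_self dollar))
      have key : ∀ y : α, ∑ t ∈ S.filter (fun t => t.head! = y), probFrom p w t
          ≤ p w y := by
        intro y
        have htail : ∀ t ∈ S.filter (fun t => t.head! = y), t = y :: t.tail := by
          intro t ht
          rw [Finset.mem_filter] at ht
          obtain ⟨ht1, ht2⟩ := ht
          have : t ≠ [] := fun h0 => hnil (h0 ▸ ht1)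
          conv_lhs => rw [← List.cons_head!_tail this]
          rw [ht2]
        calc ∑ t ∈ S.filter (fun t => t.head! = y), probFrom p w t
            = ∑ t ∈ S.filter (fun t => t.head! = y), p w y * probFrom p (w ++ [y]) t.tail := by
              refine Finset.sum_congr rfl fun t ht => ?_
              conv_lhs => rw [htail t ht]
              rfl
          _ = p w y * ∑ t ∈ S.filter (fun t => t.head! = y), probFrom p (w ++ [y]) t.tail := by
              rw [Finset.mul_sum]
          _ = p w y * ∑ t' ∈ (S.filter (fun t => t.head! = y)).image List.tail,
                probFrom p (w ++ [y]) t' := by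
              rw [Finset.sum_image]
              intro t1 h1 t2 h2 he
              rw [htail t1 h1, htail t2 h2, he]
          _ ≤ p w y * 1 := by
              refine mul_le_mul_of_nonneg_left ?_ (hp.nonneg w y)
              refine ih (w ++ [y]) _ ?_ ?_
              · intro t' ht'
                rw [Finset.mem_image] at ht'
                obtain ⟨t, ht, rfl⟩ := ht'
                have := hlen t (Finset.mem_filter.mp ht).1
                have h0 : t ≠ [] := fun h0 => hnil (h0 ▸ (Finset.mem_filter.mp ht).1)
                cases t with
                | nil => exact absurd rfl h0
                | cons a t => simpa using Nat.lt_succ_iff.mp (Nat.lt_of_lt_of_le (Nat.lt_succ_self _) (by simpa using this))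
              · intro t' ht'
                rw [Finset.mem_image] at ht'
                obtain ⟨t, ht, rfl⟩ := ht'
                have h1 := hmem t (Finset.mem_filter.mp ht).1
                have := htail t ht
                rw [List.append_assoc, List.singleton_append, ← this]
                exact h1
          _ = p w y := mul_one _
      calc ∑ t ∈ S, probFrom p w t
          = ∑ y : α, ∑ t ∈ S.filter (fun t => t.head! = y), probFrom p w t :=
            (Finset.sum_fiberwise S (fun t => t.head!) (fun t => probFrom p w t)).symm
        _ ≤ ∑ y : α, p w y := Finset.sum_le_sum fun y _ => key y
        _ ≤ 1 := sum_le_one hp w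


/-- total probability mass of language strings extending `w`. -/
def mass (dollar : α) (p : List α → α → ℝ) (w : List α) : ℝ :=
  ∑' t : {t : List α // w ++ t ∈ Lang dollar p}, strProb p (w ++ t)

lemma summable_lang (hterm : TerminatesAS dollar p) :
    Summable (fun x : Lang dollar p => strProb p (x : List α)) := by
  by_contra h
  rw [TerminatesAS, tsum_eq_zero_of_not_summable h] at hterm
  norm_num at hterm

lemma summable_mass (hterm : TerminatesAS dollar p) (w : List α) :
    Summable (fun t : {t : List α // w ++ t ∈ Lang dollar p} => strProb p (w ++ (t : List α))) := by
  have := (summable_lang hterm).comp_injective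
    (i := fun t : {t : List α // w ++ t ∈ Lang dollar p} => (⟨w ++ (t : List α), t.2⟩ : Lang dollar p))
    (fun t1 t2 h => by
      apply Subtype.ext
      have : w ++ (t1 : List α) = w ++ (t2 : List α) := congrArg Subtype.val h
      exact List.append_cancel_left this)
  exact this

lemma mass_le (hp : IsProbModel dollar p) (w : List α) :
    mass dollar p w ≤ strProb p w := by
  refine tsum_le_of_sum_le' (strProb_nonneg hp.nonneg w) ?_
  intro s
  have e1 : ∑ t ∈ s, strProb p (w ++ (t : List α))
      = ∑ t ∈ s.image Subtype.val, strProb p (w ++ t) := by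
    rw [Finset.sum_image (fun t1 h1 t2 h2 h => Subtype.ext h)]
  rw [e1]
  set S := s.image Subtype.val with hS
  have hmem : ∀ t ∈ S, w ++ t ∈ Lang dollar p := by
    intro t ht
    rw [hS, Finset.mem_image] at ht
    obtain ⟨t', _, rfl⟩ := ht
    exact t'.2
  calc ∑ t ∈ S, strProb p (w ++ t) = ∑ t ∈ S, strProb p w * probFrom p w t := by
        exact Finset.sum_congr rfl fun t _ => strProb_append p w t
    _ = strProb p w * ∑ t ∈ S, probFrom p w t := (Finset.mul_sum _ _ _).symm
    _ ≤ strProb p w * 1 := by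
        refine mul_le_mul_of_nonneg_left ?_ (strProb_nonneg hp.nonneg w)
        exact kraft hp (S.sup List.length) w S (fun t ht => Finset.le_sup ht) hmem
    _ = strProb p w := mul_one _

lemma mass_rec (hp : IsProbModel dollar p) (hterm : TerminatesAS dollar p)
    {w : List α} (hw : dollar ∉ w) :
    mass dollar p w = ∑ y : α, mass dollar p (w ++ [y]) := by
  classical
  -- w itself is not in the language
  have hwnot : w ++ [] ∉ Lang dollar p := by
    rw [List.append_nil]
    intro hmem
    obtain ⟨u, hu, _⟩ := hmem.2
    exact hw (hu ▸ List.mem_append_right u (List.mem_singleton_self dollar))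
  -- equivalence with a sigma type
  let e : (Σ y : α, {t : List α // (w ++ [y]) ++ t ∈ Lang dollar p})
      ≃ {t : List α // w ++ t ∈ Lang dollar p} :=
    { toFun := fun z => ⟨z.2.1.cons z.1, by
        have := z.2.2
        rwa [List.append_assoc, List.singleton_append] at this⟩
      invFun := fun t => by
        refine ⟨t.1.head (fun h0 => ?_), ⟨t.1.tail, ?_⟩⟩
        · exact hwnot (by rw [← h0] at hwnot ⊢; simpa using t.2)
        · have h0 : t.1 ≠ [] := fun h0 => hwnot (by simpa [h0] using t.2)
          have : (t.1.head h0) :: t.1.tail = t.1 := List.cons_head_tail h0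
          rw [List.append_assoc, List.singleton_append, this]
          exact t.2
      left_inv := fun z => by
        ext
        · rfl
        · simp
      right_inv := fun t => by
        apply Subtype.ext
        simp [List.cons_head_tail]  }
  have hsum : Summable (fun z : (Σ y : α, {t : List α // (w ++ [y]) ++ t ∈ Lang dollar p}) =>
      strProb p ((w ++ [z.1]) ++ (z.2 : List α))) := by
    apply (summable_mass hterm w).comp_injective e.injective |>.congr
    intro z
    simp [e, List.append_assoc]
  calc mass dollar p w
      = ∑' z : (Σ y : α, {t : List α // (w ++ [y]) ++ t ∈ Lang dollar p}),
          strProb p ((w ++ [z.1]) ++ (z.2 : List α)) := by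
        rw [mass, ← e.tsum_eq]
        apply tsum_congr
        intro z
        congr 1
        simp [e, List.append_assoc]
      _ = ∑' y : α, ∑' t : {t : List α // (w ++ [y]) ++ t ∈ Lang dollar p},
          strProb p ((w ++ [y]) ++ (t : List α)) := Summable.tsum_sigma hsum
      _ = ∑ y : α, mass dollar p (w ++ [y]) := tsum_fintype _

lemma mass_eq (hp : IsProbModel dollar p) (hterm : TerminatesAS dollar p) :
    ∀ w : List α, dollar ∉ w → mass dollar p w = strProb p w := by
  intro w
  induction w using List.reverseRecOn with
  | nil =>
    intro _
    have h1 : mass dollar p [] = ∑' x : Lang dollar p, strProb p (x : List α) := by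
      apply tsum_congr; intro x; rw [List.nil_append]
    rw [h1, hterm]
    rfl
  | append_singleton w y ih =>
    intro hw
    have hww : dollar ∉ w := fun h => hw (List.mem_append_left _ h)
    have h2 : ∑ z : α, strProb p (w ++ [z]) = strProb p w := by
      calc ∑ z : α, strProb p (w ++ [z]) = ∑ z : α, strProb p w * p w z := by
            exact Finset.sum_congr rfl fun z _ => strProb_concat p w z
        _ = strProb p w * ∑ z : α, p w z := (Finset.mul_sum _ _ _).symm
        _ = strProb p w := by rw [hp.sum_one w hww, mul_one]
    have h1 : ∑ z : α, mass dollar p (w ++ [z]) = ∑ z : α, strProb p (w ++ [z]) := by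
      rw [← mass_rec hp hterm hww, ih hww, h2]
    have := (Finset.sum_eq_sum_iff_of_le
      (f := fun z : α => mass dollar p (w ++ [z]))
      (g := fun z : α => strProb p (w ++ [z]))
      (fun z _ => mass_le hp (w ++ [z]))).mp h1
    exact this y (Finset.mem_univ y)


lemma mass_concat (hp : IsProbModel dollar p) (hterm : TerminatesAS dollar p)
    {w : List α} (hw : dollar ∉ w) (y : α) :
    mass dollar p (w ++ [y]) = strProb p (w ++ [y]) := by
  have h2 : ∑ z : α, strProb p (w ++ [z]) = strProb p w := by
    calc ∑ z : α, strProb p (w ++ [z]) = ∑ z : α, strProb p w * p w z := by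
          exact Finset.sum_congr rfl fun z _ => strProb_concat p w z
      _ = strProb p w * ∑ z : α, p w z := (Finset.mul_sum _ _ _).symm
      _ = strProb p w := by rw [hp.sum_one w hw, mul_one]
  have h1 : ∑ z : α, mass dollar p (w ++ [z]) = ∑ z : α, strProb p (w ++ [z]) := by
    rw [← mass_rec hp hterm hw, mass_eq hp hterm w hw, h2]
  exact (Finset.sum_eq_sum_iff_of_le
    (f := fun z : α => mass dollar p (w ++ [z]))
    (g := fun z : α => strProb p (w ++ [z]))
    (fun z _ => mass_le hp (w ++ [z]))).mp h1 y (Finset.mem_univ y)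

lemma take_get_drop_id (x : List α) (i : Fin x.length) :
    (x.take i ++ [x.get i]) ++ x.drop (i + 1) = x := by
  rw [List.append_assoc, List.singleton_append, List.get_eq_getElem,
    List.getElem_cons_drop i.isLt, List.take_append_drop]

end Model

-- helper list lemmas
lemma take_append_singleton (h t : List α) (y : α) :
    ((h ++ [y]) ++ t).take h.length = h := by
  rw [List.append_assoc]; exact List.take_left

lemma get_append_singleton (h t : List α) (y : α) (hb : h.length < ((h ++ [y]) ++ t).length) :
    ((h ++ [y]) ++ t).get ⟨h.length, hb⟩ = y := by
  rw [List.get_eq_getElem, List.getElem_append_left (by simp)]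
  simp

lemma drop_append_singleton (h t : List α) (y : α) :
    ((h ++ [y]) ++ t).drop (h.length + 1) = t :=
  List.drop_left' (by simp)

lemma dollar_notin_take {dollar : α} {p : List α → α → ℝ} {x : List α}
    (hx : x ∈ Lang dollar p) {i : ℕ} (hi : i < x.length) : dollar ∉ x.take i := by
  obtain ⟨hpos, u, hu, hdu⟩ := hx
  subst hu
  have hi' : i ≤ u.length := by
    simp only [List.length_append, List.length_singleton] at hi; omega
  rw [List.take_eq_left_iff.mpr (Or.inr hi')]
  exact fun hmem => hdu ((List.take_sublist _ _).subset hmem)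


/-- The KL divergence between two sequence models equals the
`p_s`-weighted sum over all $-free histories of the per-history next-symbol
KL divergence. -/
theorem kl_chain_rule [Fintype α] (dollar : α) (ps pa : List α → α → ℝ)
    (hps : IsProbModel dollar ps) (hpa : IsProbModel dollar pa)
    (hsub : Lang dollar ps ⊆ Lang dollar pa)
    (hterm : TerminatesAS dollar ps)
    (hsum1 : Summable fun x : Lang dollar ps =>
      strProb ps x * Real.log (strProb ps x / strProb pa x))
    (hsum2 : Summable fun z : {h : List α // dollar ∉ h} × α =>
      strProb ps z.1 * (ps z.1 z.2 * Real.log (ps z.1 z.2 / pa z.1 z.2))) :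
    KLdiv dollar ps pa
      = ∑' h : {h : List α // dollar ∉ h},
          strProb ps h * ∑ x : α, ps h x * Real.log (ps h x / pa h x) := by
  set ℓ : List α → α → ℝ := fun h y => Real.log (ps h y / pa h y) with hℓ
  set H := {h : List α // dollar ∉ h} with hH
  let C : H × α → Type _ := fun z => {t : List α // (z.1.1 ++ [z.2]) ++ t ∈ Lang dollar ps}
  let F : (Σ z : H × α, C z) → ℝ :=
    fun σ => strProb ps ((σ.1.1.1 ++ [σ.1.2]) ++ σ.2.1) * ℓ σ.1.1.1 σ.1.2
  let G : (Σ x : Lang dollar ps, Fin (x.1.length)) → ℝ :=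
    fun σ => strProb ps σ.1.1 * ℓ (σ.1.1.take σ.2) (σ.1.1.get σ.2)
  let g : H × α → ℝ := fun z => strProb ps z.1.1 * (ps z.1.1 z.2 * ℓ z.1.1 z.2)
  let e2 : (Σ z : H × α, C z) ≃ (Σ x : Lang dollar ps, Fin (x.1.length)) :=
    { toFun := fun σ => ⟨⟨(σ.1.1.1 ++ [σ.1.2]) ++ σ.2.1, σ.2.2⟩,
        ⟨σ.1.1.1.length, by simp [List.length_append]⟩⟩
      invFun := fun σ => ⟨⟨⟨σ.1.1.take σ.2, dollar_notin_take σ.1.2 σ.2.isLt⟩, σ.1.1.get σ.2⟩,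
        ⟨σ.1.1.drop (σ.2 + 1), by
          rw [take_get_drop_id σ.1.1 σ.2]; exact σ.1.2⟩⟩
      left_inv := by
        rintro ⟨⟨⟨h, hh⟩, y⟩, ⟨t, ht⟩⟩
        dsimp only
        refine Sigma.ext ?_ ?_
        · dsimp only
          refine Prod.ext ?_ ?_
          · exact Subtype.ext (take_append_singleton h t y)
          · exact get_append_singleton h t y _
        · dsimp only
          rw [Subtype.heq_iff_coe_eq]
          · exact drop_append_singleton h t y
          · intro t'
            rw [take_append_singleton h t y, get_append_singleton h t y _]
      right_inv := by
        rintro ⟨⟨x, hx⟩, i⟩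
        dsimp only
        refine Sigma.ext (Subtype.ext (take_get_drop_id x i)) ?_
        refine (Fin.heq_ext_iff (by exact congrArg List.length (take_get_drop_id x i))).mpr ?_
        simp [List.length_take, Nat.le_of_lt i.isLt, min_eq_left] }
  have hFG : ∀ σ, F σ = G (e2 σ) := by
    rintro ⟨⟨⟨h, hh⟩, y⟩, ⟨t, ht⟩⟩
    show strProb ps ((h ++ [y]) ++ t) * ℓ h y
      = strProb ps ((h ++ [y]) ++ t) * ℓ (((h ++ [y]) ++ t).take h.length)
          (((h ++ [y]) ++ t).get ⟨h.length, _⟩)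
    rw [take_append_singleton h t y, get_append_singleton h t y _]
  have habsfib : ∀ z : H × α, Summable (fun t : C z => |F ⟨z, t⟩|) := by
    intro z
    have := (summable_mass (p := ps) hterm (z.1.1 ++ [z.2])).mul_right |ℓ z.1.1 z.2|
    refine this.congr fun t => ?_
    show strProb ps ((z.1.1 ++ [z.2]) ++ t.1) * |ℓ z.1.1 z.2| = |F ⟨z, t⟩|
    rw [show F ⟨z, t⟩ = strProb ps ((z.1.1 ++ [z.2]) ++ t.1) * ℓ z.1.1 z.2 from rfl]
    rw [abs_mul, abs_of_nonneg (strProb_nonneg hps.nonneg _)]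
  have hfibsum : ∀ z : H × α, ∑' t : C z, F ⟨z, t⟩ = g z := by
    intro z
    calc ∑' t : C z, F ⟨z, t⟩
        = ∑' t : C z, strProb ps ((z.1.1 ++ [z.2]) ++ t.1) * ℓ z.1.1 z.2 :=
          tsum_congr fun t => rfl
      _ = (∑' t : C z, strProb ps ((z.1.1 ++ [z.2]) ++ t.1)) * ℓ z.1.1 z.2 :=
          tsum_mul_right
      _ = mass dollar ps (z.1.1 ++ [z.2]) * ℓ z.1.1 z.2 := rfl
      _ = strProb ps (z.1.1 ++ [z.2]) * ℓ z.1.1 z.2 := by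
          rw [mass_concat hps hterm z.1.2 z.2]
      _ = g z := by rw [strProb_concat, mul_assoc]
  have habsfibsum : ∀ z : H × α, ∑' t : C z, |F ⟨z, t⟩| = |g z| := by
    intro z
    calc ∑' t : C z, |F ⟨z, t⟩|
        = ∑' t : C z, strProb ps ((z.1.1 ++ [z.2]) ++ t.1) * |ℓ z.1.1 z.2| := by
          refine tsum_congr fun t => ?_
          rw [show F ⟨z, t⟩ = strProb ps ((z.1.1 ++ [z.2]) ++ t.1) * ℓ z.1.1 z.2 from rfl]
          rw [abs_mul, abs_of_nonneg (strProb_nonneg hps.nonneg _)]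
      _ = (∑' t : C z, strProb ps ((z.1.1 ++ [z.2]) ++ t.1)) * |ℓ z.1.1 z.2| :=
          tsum_mul_right
      _ = strProb ps (z.1.1 ++ [z.2]) * |ℓ z.1.1 z.2| := by
          rw [show (∑' t : C z, strProb ps ((z.1.1 ++ [z.2]) ++ t.1))
            = mass dollar ps (z.1.1 ++ [z.2]) from rfl]
          rw [mass_concat hps hterm z.1.2 z.2]
      _ = |g z| := by
          rw [show g z = strProb ps z.1.1 * ps z.1.1 z.2 * ℓ z.1.1 z.2 by
            show strProb ps z.1.1 * (ps z.1.1 z.2 * ℓ z.1.1 z.2) = _; ring]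
          rw [abs_mul (strProb ps z.1.1 * ps z.1.1 z.2), ← strProb_concat,
            abs_of_nonneg (strProb_nonneg hps.nonneg _)]
  have hFsummable : Summable F := by
    apply Summable.of_abs
    rw [summable_sigma_of_nonneg (fun σ => abs_nonneg (F σ))]
    exact ⟨habsfib, hsum2.abs.congr fun z => (habsfibsum z).symm⟩
  have hGsummable : Summable G := by
    rw [← Equiv.summable_iff e2]
    exact hFsummable.congr hFG
  have step1 : KLdiv dollar ps pa = ∑' σ : (Σ x : Lang dollar ps, Fin (x.1.length)), G σ := by
    rw [KLdiv, Summable.tsum_sigma hGsummable]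
    refine tsum_congr fun x => ?_
    rw [tsum_fintype]
    have hxs : 0 < strProb ps x.1 := x.2.1
    have hxa : 0 < strProb pa x.1 := (hsub x.2).1
    rw [show (Real.log (strProb ps x.1 / strProb pa x.1))
      = ∑ i : Fin x.1.length, ℓ (x.1.take i) (x.1.get i) from
        log_ratio_chain hps.nonneg hpa.nonneg hxs hxa, Finset.mul_sum]
  have step2 : ∑' σ : (Σ x : Lang dollar ps, Fin (x.1.length)), G σ
      = ∑' σ : (Σ z : H × α, C z), F σ := by
    rw [← Equiv.tsum_eq e2 G]
    exact tsum_congr fun σ => (hFG σ).symm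
  have step3 : ∑' σ : (Σ z : H × α, C z), F σ = ∑' z : H × α, g z := by
    rw [Summable.tsum_sigma hFsummable]
    exact tsum_congr hfibsum
  have step4 : ∑' z : H × α, g z
      = ∑' h : H, strProb ps h.1 * ∑ x : α, ps h.1 x * ℓ h.1 x := by
    rw [Summable.tsum_prod hsum2]
    refine tsum_congr fun h => ?_
    rw [tsum_fintype, Finset.mul_sum]
  rw [step1, step2, step3, step4]

end
end

section
/- For every backoff-complete topology over Σ and every ε-companion distribution p, the induced distribution p* is a probability distribution at every state: for every q ∈ Q, Σ_{x∈L*[q]} p*(x|q) = 1. (In particular, every quantity d(q₀,q) appearing in the definition of p* satisfies d(q₀,q) ≥ ε > 0, so p* is well defined.) -/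
/-!
Induction on the rank. At a state without backoff, `p*` is `p` on `L[q]` and `p(φ|q) = 0`.
If `bo(q) = q'`, then `L*[q] = L*[q']`, `p*(·|q) = p(·|q)` on `L[q]`, and off `L[q]` it is
`p*(·|q')` scaled by `p(φ|q)/d(q,q')`. By induction and `L[q] ⊆ L[q']`, the mass of `p*(·|q')`
off `L[q]` is `1 - Σ_{L[q]} p(x|q') = d(q,q')`, so the scaled mass is exactly `p(φ|q)`.
The bound `d(q,q') ≥ ε` holds because the mass missing from `L[q]` at `q'` contains either
`p(φ|q') ≥ ε` or, when `q'` has no backoff, `p(x|q') ≥ ε` for a label `x ∈ L[q'] \ L[q]`.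
-/

open scoped BigOperators
open Classical

noncomputable section

variable {α : Type*} {Q : Type*}

/-- A backoff-complete topology over the alphabet `α` with states `Q`. -/
structure BackoffTopology (α : Type*) (Q : Type*) where
  supp : Q → Finset α
  bo : Q → Option Q
  rank : Q → ℕ
  rank_lt : ∀ q q', bo q = some q' → rank q' < rank q
  supp_sub : ∀ q q', bo q = some q' → supp q ⊆ supp q'
  supp_ssub : ∀ q q', bo q = some q' → bo q' = none → supp q ⊂ supp q'

namespace BackoffTopology

/-- `iter n q` is the `n`-th state of the backoff chain of `q` (if it exists). -/
def iter (T : BackoffTopology α Q) : ℕ → Q → Option Q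
  | 0, q => some q
  | n + 1, q => (T.iter n q).bind T.bo

/-- `L*[q]`: union of the label sets along the backoff chain of `q`. -/
def suppStar (T : BackoffTopology α Q) (q : Q) : Set α :=
  {x | ∃ n q', T.iter n q = some q' ∧ x ∈ T.supp q'}

/-- `q^x`: the first state of the backoff chain of `q` whose label set contains `x`. -/
def qx (T : BackoffTopology α Q) (q : Q) (x : α) : Option Q :=
  if h : ∃ n, ∃ q', T.iter n q = some q' ∧ x ∈ T.supp q'
  then T.iter (Nat.find h) q
  else none

/-- `B(q)`: states whose backoff chain contains `q`. -/
def B [Fintype Q] (T : BackoffTopology α Q) (q : Q) : Finset Q :=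
  Finset.univ.filter fun qa => ∃ n, T.iter n qa = some q

/-- `B₁(q)`: states backing off to `q` in one step. -/
def B1 [Fintype Q] (T : BackoffTopology α Q) (q : Q) : Finset Q :=
  Finset.univ.filter fun q₀ => T.bo q₀ = some q

end BackoffTopology

/-- An ε-companion distribution on a backoff-complete topology: `p q x` is `p(x|q)` and
`pphi q` is `p(φ|q)`. -/
structure Companion (T : BackoffTopology α Q) (ε : ℝ) where
  p : Q → α → ℝ
  pphi : Q → ℝ
  p_ge : ∀ q, ∀ x ∈ T.supp q, ε ≤ p q x
  pphi_ge : ∀ q q', T.bo q = some q' → ε ≤ pphi q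
  pphi_none : ∀ q, T.bo q = none → pphi q = 0
  total : ∀ q, (∑ x ∈ T.supp q, p q x) + pphi q = 1

namespace Companion

variable {T : BackoffTopology α Q} {ε : ℝ}

/-- `d(q₀,q) = 1 − Σ_{x∈L[q₀]} p(x|q)`, for `bo q₀ = q`. -/
def d (c : Companion T ε) (q₀ q : Q) : ℝ :=
  1 - ∑ x ∈ T.supp q₀, c.p q x

/-- `alphaN n q = α(q, q″)` where `q″` is the `n`-th state of the backoff chain of `q`:
the product of `p(φ|s)/d(s,bo(s))` over the first `n` states `s` of the chain. -/
def alphaN (c : Companion T ε) : ℕ → Q → ℝ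
  | 0, _ => 1
  | n + 1, q =>
    match T.bo q with
    | none => 1
    | some q' => c.pphi q / c.d q q' * c.alphaN n q'

/-- The induced distribution `p*(x|q) = α(q,q^x)·p(x|q^x)` for `x ∈ L*[q]`, else `0`. -/
def pStar (c : Companion T ε) (q : Q) (x : α) : ℝ :=
  if h : ∃ n, ∃ q', T.iter n q = some q' ∧ x ∈ T.supp q'
  then c.alphaN (Nat.find h) q * c.p ((T.iter (Nat.find h) q).getD q) x
  else 0

end Companion

/-- `C(x,q) = Σ_{q_a ∈ B(q)} c(x,q_a)·1[q_a^x = q]` for `x ∈ Σ`. -/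
def Cx [Fintype Q] (T : BackoffTopology α Q) (c : α → Q → ℝ) (x : α) (q : Q) : ℝ :=
  ∑ qa ∈ T.B q, if T.qx qa x = some q then c x qa else 0

/-- `C(φ,q) = Σ_{q_a ∈ B(q)} Σ_{x ∉ L[q]} c(x,q_a)`. -/
def Cphi [Fintype α] [Fintype Q] (T : BackoffTopology α Q) (c : α → Q → ℝ) (q : Q) : ℝ :=
  ∑ qa ∈ T.B q, ∑ x : α, if x ∈ T.supp q then 0 else c x qa

namespace BackoffTopology

variable (T : BackoffTopology α Q)

theorem iter_succ_of_bo_eq_some {q q' : Q} (h : T.bo q = some q') (n : ℕ) :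
    T.iter (n + 1) q = T.iter n q' := by
  induction n with
  | zero => simp [iter, h]
  | succ n ih => rw [iter, ih]; rfl

theorem iter_succ_of_bo_eq_none {q : Q} (h : T.bo q = none) (n : ℕ) :
    T.iter (n + 1) q = none := by
  induction n with
  | zero => simp [iter, h]
  | succ n ih => rw [iter, ih]; rfl

theorem mem_suppStar {q : Q} {x : α} :
    x ∈ T.suppStar q ↔ ∃ n q', T.iter n q = some q' ∧ x ∈ T.supp q' :=
  Iff.rfl

theorem supp_subset_suppStar (q : Q) : ↑(T.supp q) ⊆ T.suppStar q :=
  fun _ hx => ⟨0, q, rfl, hx⟩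

theorem suppStar_eq_of_bo_eq_some {q q' : Q} (h : T.bo q = some q') :
    T.suppStar q = T.suppStar q' := by
  ext x
  constructor
  · rintro ⟨_ | n, s, hs, hxs⟩
    · obtain rfl : q = s := Option.some.inj hs
      exact T.supp_subset_suppStar q' (T.supp_sub q q' h hxs)
    · exact ⟨n, s, T.iter_succ_of_bo_eq_some h n ▸ hs, hxs⟩
  · rintro ⟨n, s, hs, hxs⟩
    exact ⟨n + 1, s, (T.iter_succ_of_bo_eq_some h n).trans hs, hxs⟩

theorem suppStar_eq_of_bo_eq_none {q : Q} (h : T.bo q = none) :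
    T.suppStar q = T.supp q := by
  refine subset_antisymm ?_ (T.supp_subset_suppStar q)
  rintro x ⟨_ | n, s, hs, hxs⟩
  · obtain rfl : q = s := Option.some.inj hs
    exact hxs
  · simp [T.iter_succ_of_bo_eq_none h n] at hs

end BackoffTopology

namespace Companion

variable {T : BackoffTopology α Q} {ε : ℝ} (c : Companion T ε)

theorem sum_le_sum_supp (hε : 0 ≤ ε) {q : Q} {s : Finset α} (hs : s ⊆ T.supp q) :
    ∑ x ∈ s, c.p q x ≤ ∑ x ∈ T.supp q, c.p q x :=
  Finset.sum_le_sum_of_subset_of_nonneg hs fun x hx _ => hε.trans (c.p_ge q x hx)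

theorem le_d (hε : 0 ≤ ε) {q₀ q : Q} (h : T.bo q₀ = some q) : ε ≤ c.d q₀ q := by
  have htotal := c.total q
  rw [d]
  cases hq : T.bo q with
  | some q' =>
    have := c.sum_le_sum_supp hε (T.supp_sub q₀ q h)
    linarith [c.pphi_ge q q' hq]
  | none =>
    obtain ⟨x, hxq, hxq₀⟩ := Finset.exists_of_ssubset (T.supp_ssub q₀ q h hq)
    have hsub : insert x (T.supp q₀) ⊆ T.supp q :=
      Finset.insert_subset hxq (T.supp_sub q₀ q h)
    have := c.sum_le_sum_supp hε hsub
    rw [Finset.sum_insert hxq₀] at this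
    linarith [c.p_ge q x hxq, c.pphi_none q hq]

theorem pStar_of_mem_suppStar {q : Q} {x : α} (h : x ∈ T.suppStar q) :
    c.pStar q x = c.alphaN (Nat.find h) q * c.p ((T.iter (Nat.find h) q).getD q) x :=
  dif_pos h

theorem pStar_of_mem_supp {q : Q} {x : α} (hx : x ∈ T.supp q) : c.pStar q x = c.p q x := by
  have h : x ∈ T.suppStar q := T.supp_subset_suppStar q hx
  have hfind : Nat.find h = 0 := (Nat.find_eq_zero h).2 ⟨q, rfl, hx⟩
  rw [c.pStar_of_mem_suppStar h, hfind, alphaN, one_mul]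
  rfl

theorem pStar_of_bo_eq_some {q q' : Q} (hb : T.bo q = some q') {x : α} (hx : x ∉ T.supp q)
    (hx' : x ∈ T.suppStar q') : c.pStar q x = c.pphi q / c.d q q' * c.pStar q' x := by
  have h : x ∈ T.suppStar q := T.suppStar_eq_of_bo_eq_some hb ▸ hx'
  have hshift := T.iter_succ_of_bo_eq_some hb
  have hfind : Nat.find h = Nat.find hx' + 1 := by
    rw [Nat.find_comp_succ h (by simpa only [hshift] using T.mem_suppStar.1 hx')
      (by simpa [BackoffTopology.iter] using hx)]
    exact congrArg (· + 1) (Nat.find_congr' (by simp only [hshift, implies_true]))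
  obtain ⟨s, hs, -⟩ := Nat.find_spec hx'
  rw [c.pStar_of_mem_suppStar h, c.pStar_of_mem_suppStar hx', hfind, hshift, hs, alphaN, hb]
  simp only [Option.getD_some]
  ring

theorem sum_pStar_of_bo_eq_none [Fintype α] {q : Q} (hb : T.bo q = none) :
    ∑ x ∈ Finset.univ.filter (· ∈ T.suppStar q), c.pStar q x = 1 := by
  have hS : Finset.univ.filter (· ∈ T.suppStar q) = T.supp q := by
    ext x
    simp [T.suppStar_eq_of_bo_eq_none hb]
  rw [hS, Finset.sum_congr rfl fun x hx => c.pStar_of_mem_supp hx]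
  linarith [c.total q, c.pphi_none q hb]

theorem sum_pStar_of_bo_eq_some [Fintype α] {q q' : Q} (hb : T.bo q = some q')
    (hd : c.d q q' ≠ 0) (ih : ∑ x ∈ Finset.univ.filter (· ∈ T.suppStar q'), c.pStar q' x = 1) :
    ∑ x ∈ Finset.univ.filter (· ∈ T.suppStar q), c.pStar q x = 1 := by
  set S := Finset.univ.filter (· ∈ T.suppStar q')
  have hsub : T.supp q ⊆ S := fun x hx => by
    simpa [S] using T.supp_subset_suppStar q' (T.supp_sub q q' hb hx)
  have hbackoff : ∑ x ∈ S \ T.supp q, c.pStar q' x = c.d q q' := by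
    rw [d, ← ih, ← Finset.sum_sdiff hsub,
      Finset.sum_congr rfl fun x hx => c.pStar_of_mem_supp (T.supp_sub q q' hb hx)]
    ring
  have hstep : ∀ x ∈ S \ T.supp q, c.pStar q x = c.pphi q / c.d q q' * c.pStar q' x := by
    intro x hx
    obtain ⟨hxS, hxq⟩ := Finset.mem_sdiff.1 hx
    exact c.pStar_of_bo_eq_some hb hxq (Finset.mem_filter.1 hxS).2
  rw [T.suppStar_eq_of_bo_eq_some hb, ← Finset.sum_sdiff hsub, Finset.sum_congr rfl hstep,
    ← Finset.mul_sum, hbackoff, div_mul_cancel₀ _ hd,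
    Finset.sum_congr rfl fun x hx => c.pStar_of_mem_supp hx]
  linarith [c.total q]

theorem sum_pStar_eq_one [Fintype α] (hε : 0 < ε) (q : Q) :
    ∑ x ∈ Finset.univ.filter (· ∈ T.suppStar q), c.pStar q x = 1 := by
  cases hb : T.bo q with
  | none => exact c.sum_pStar_of_bo_eq_none hb
  | some q' =>
    have hd := (hε.trans_le (c.le_d hε.le hb)).ne'
    exact c.sum_pStar_of_bo_eq_some hb hd (sum_pStar_eq_one hε q')
termination_by T.rank q
decreasing_by exact T.rank_lt q q' hb

end Companion

theorem pStar_sum_one_general [Fintype α] (T : BackoffTopology α Q)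
    {ε : ℝ} (hε : 0 < ε) (c : Companion T ε) :
    (∀ q₀ q : Q, T.bo q₀ = some q → ε ≤ c.d q₀ q) ∧
    (∀ q : Q,
      ∑ x ∈ Finset.univ.filter (fun x : α => x ∈ T.suppStar q), c.pStar q x = 1) :=
  ⟨fun _ _ h => c.le_d hε.le h, c.sum_pStar_eq_one hε⟩

/-- For every backoff-complete topology and every ε-companion distribution,
the induced distribution is a probability distribution at every state; in particular every
denominator `d(q₀,q)` is at least `ε > 0`. -/
theorem pStar_sum_one [Fintype α] [Fintype Q] (T : BackoffTopology α Q)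
    {ε : ℝ} (hε : 0 < ε) (c : Companion T ε) :
    (∀ q₀ q : Q, T.bo q₀ = some q → ε ≤ c.d q₀ q) ∧
    (∀ q : Q,
      ∑ x ∈ Finset.univ.filter (fun x : α => x ∈ T.suppStar q), c.pStar q x = 1) :=
  pStar_sum_one_general T hε c

end
end
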